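/- Squared L^2(ρ∞)-norm computation for the test function: let φ_0, φ_1, …, φ_d ∈ L^2(I×μ_U) with weak derivatives in L^2, write φ = (φ_1,…,φ_d), and set G(t,x,v) = -∂_t φ_0 + v·∇_x φ_0 + v·∂_t φ - Σ_i v_i (v·∂_{x_i}φ) + φ·∇_x U. Then ∫ G^2 dt dρ∞ = ∫ [ (∂_t φ_0 - φ·∇U)^2 + |∇_x φ_0 + ∂_t φ|^2 + 2(∂_t φ_0 - φ·∇U)(∇_x·φ) + 3Σ_i(∂_{x_i}φ_i)^2 + Σ_{i≠j}(∂_{x_i}φ_j)^2 + Σ_{i≠j}∂_{x_i}φ_i ∂_{x_j}φ_j + Σ_{i≠j}∂_{x_i}φ_j ∂_{x_j}φ_i ] dt dμ_U, and consequently ∫ G^2 dt dρ∞ ≤ ∫ (∂_t φ_0 - φ·∇U + ∇_x·φ)^2 dt dμ_U + 2 Σ_{(i,j)≠(0,0)} ‖∂_{x_i}φ_j‖^2_{L^2(I×μ_U)} (with ∂_{x_0} = ∂_t). -/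

import Mathlib

open MeasureTheory Real
open scoped RealInnerProductSpace BigOperators

noncomputable section

/-- Time derivative `∂_t` of a function on `ℝ × ℝ^d`. -/
def Dt {d : ℕ} (g : ℝ × EuclideanSpace ℝ (Fin d) → ℝ)
    (p : ℝ × EuclideanSpace ℝ (Fin d)) : ℝ :=
  fderiv ℝ g p (1, 0)

/-- Spatial partial derivative `∂_{x_i}` of a function on `ℝ × ℝ^d`. -/
def Dx {d : ℕ} (i : Fin d) (g : ℝ × EuclideanSpace ℝ (Fin d) → ℝ)
    (p : ℝ × EuclideanSpace ℝ (Fin d)) : ℝ :=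
  fderiv ℝ g p (0, EuclideanSpace.single i (1 : ℝ))

/-- The test function
`G(t,x,v) = -∂_tφ₀ + v·∇_xφ₀ + v·∂_tφ - Σᵢ vᵢ (v·∂_{xᵢ}φ) + φ·∇_x U`. -/
def testG {d : ℕ} (U : EuclideanSpace ℝ (Fin d) → ℝ)
    (φ₀ : ℝ × EuclideanSpace ℝ (Fin d) → ℝ)
    (φ : Fin d → ℝ × EuclideanSpace ℝ (Fin d) → ℝ)
    (q : (ℝ × EuclideanSpace ℝ (Fin d)) × EuclideanSpace ℝ (Fin d)) : ℝ :=
  -(Dt φ₀ q.1) + (∑ i, q.2 i * Dx i φ₀ q.1) + (∑ i, q.2 i * Dt (φ i) q.1) -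
    (∑ i, q.2 i * ∑ j, q.2 j * Dx i (φ j) q.1) +
    ∑ i, φ i q.1 * gradient U q.1.2 i

/-!
By Fubini, `∫ G² dt dρ∞` is the `dt dμ_U`-integral of the Gaussian average of `G(t, x, ·)²`.
For fixed `(t, x)`, `G` is a quadratic polynomial `a + b·v + vᵀCv` in the velocity, with
`a = φ·∇U - ∂_tφ₀`, `b = ∇_xφ₀ + ∂_tφ` and `C_ij = -∂_{x_i}φ_j`. Identifying `κ` with the
pushforward of a product of one-dimensional standard Gaussians, the mixed moments of `v` factor
over coordinates: odd moments vanish by the symmetry `v ↦ -v`, `E[v_i v_j] = δ_ij` and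
`E[v_i v_j v_k v_l] = δ_ij δ_kl + δ_ik δ_jl + δ_il δ_jk` (Wick). Hence
`E[(a + b·v + vᵀCv)²] = a² + |b|² + 2a tr C + (tr C)² + |C|² + tr C²`; splitting off diagonals
gives the identity, and `|b|² ≤ 2|∇_xφ₀|² + 2|∂_tφ|²`, `tr C² ≤ |C|²` give the bound.
-/

open ProbabilityTheory Finset
open scoped NNReal ENNReal

lemma integral_eq_zero_of_odd {G : Type*} [MeasurableSpace G] [AddGroup G] [MeasurableNeg G]
    {μ : Measure G} [μ.IsNegInvariant] {f : G → ℝ} (hf : ∀ x, f (-x) = -f x) :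
    ∫ x, f x ∂μ = 0 := by
  have h := integral_neg_eq_self f μ
  simp_rw [hf, integral_neg] at h
  linarith

instance isNegInvariant_gaussianReal (v : ℝ≥0) : (gaussianReal 0 v).IsNegInvariant :=
  ⟨by simpa [Measure.neg] using gaussianReal_map_neg (μ := 0) (v := v)⟩

lemma integral_pow_two_mul_gaussianReal (k : ℕ) :
    ∫ x, x ^ (2 * k) ∂gaussianReal 0 1 = (2 * k - 1).doubleFactorial := by
  have hpdf (x : ℝ) : gaussianPDFReal 0 1 x • x ^ (2 * k) =
      (√(2 * π))⁻¹ * (fun y => y ^ (2 * k : ℝ) * exp (-(1 / 2) * y ^ (2 : ℝ))) |x| := by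
    simp only [gaussianPDFReal, NNReal.coe_one, mul_one, sub_zero, smul_eq_mul]
    rw [show (2 * k : ℝ) = ((2 * k : ℕ) : ℝ) by push_cast; ring, rpow_natCast, rpow_two,
      (even_two_mul k).pow_abs, sq_abs]
    ring_nf
  rw [integral_gaussianReal_eq_integral_smul one_ne_zero, integral_congr_ae (ae_of_all _ hpdf),
    integral_const_mul,
    integral_comp_abs (f := fun y => y ^ (2 * k : ℝ) * exp (-(1 / 2) * y ^ (2 : ℝ))),
    integral_rpow_mul_exp_neg_mul_rpow two_pos (by linarith [k.cast_nonneg (α := ℝ)]) (by norm_num),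
    show ((2 * k : ℝ) + 1) / 2 = k + 1 / 2 by ring, Gamma_nat_add_half,
    show -((2 * k : ℝ) + 1) / 2 = -(k + 1 / 2) by ring, rpow_neg (by norm_num),
    one_div, inv_rpow zero_le_two, inv_inv, rpow_add two_pos, rpow_natCast,
    show (2 : ℝ) ^ (2⁻¹ : ℝ) = √2 by rw [sqrt_eq_rpow, one_div], sqrt_mul zero_le_two]
  have : (0 : ℝ) < √2 := by positivity
  have : (0 : ℝ) < √π := by positivity
  field_simp

lemma integral_pow_gaussianReal (n : ℕ) :
    ∫ x, x ^ n ∂gaussianReal 0 1 = if Even n then ((n - 1).doubleFactorial : ℝ) else 0 := by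
  split_ifs with hn
  · obtain ⟨k, rfl⟩ := hn
    rw [← two_mul, integral_pow_two_mul_gaussianReal]
  · exact integral_eq_zero_of_odd fun x => (Nat.not_even_iff_odd.mp hn).neg_pow x

lemma pi_gaussianReal_eq_withDensity {ι : Type*} [Fintype ι] (m : ι → ℝ) (v : ι → ℝ≥0)
    (hv : ∀ i, v i ≠ 0) :
    Measure.pi (fun i => gaussianReal (m i) (v i)) =
      volume.withDensity (fun x : ι → ℝ => ∏ i, gaussianPDF (m i) (v i) (x i)) := by
  refine Measure.pi_eq fun s hs => ?_
  set h : ι → ℝ → ℝ := fun i => (s i).indicator (gaussianPDFReal (m i) (v i))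
  have hint (i : ι) : Integrable (h i) := (integrable_gaussianPDFReal _ _).indicator (hs i)
  have hnonneg (i : ι) (y : ℝ) : 0 ≤ h i y :=
    Set.indicator_nonneg (fun y _ => gaussianPDFReal_nonneg _ _ y) y
  rw [withDensity_apply _ (MeasurableSet.univ_pi hs),
    ← lintegral_indicator (MeasurableSet.univ_pi hs)]
  calc ∫⁻ x, (Set.univ.pi s).indicator (fun x : ι → ℝ => ∏ i, gaussianPDF (m i) (v i) (x i)) x
      = ∫⁻ x : ι → ℝ, ENNReal.ofReal (∏ i, h i (x i)) := by
        refine lintegral_congr fun x => ?_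
        rw [ENNReal.ofReal_prod_of_nonneg fun i _ => hnonneg i (x i)]
        by_cases hx : x ∈ Set.univ.pi s
        · simp [Set.indicator_of_mem hx, h, gaussianPDF,
            Set.indicator_of_mem (Set.mem_univ_pi.mp hx _)]
        · obtain ⟨i, hi⟩ : ∃ i, x i ∉ s i := by simpa [Set.mem_univ_pi] using hx
          rw [Set.indicator_of_notMem hx]
          exact (prod_eq_zero (mem_univ i) (by simp [h, hi])).symm
    _ = ENNReal.ofReal (∫ x : ι → ℝ, ∏ i, h i (x i)) :=
        (ofReal_integral_eq_lintegral_ofReal (Integrable.fintype_prod hint)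
          (ae_of_all _ fun x => prod_nonneg fun i _ => hnonneg i (x i))).symm
    _ = ∏ i, gaussianReal (m i) (v i) (s i) := by
        rw [integral_fintype_prod_volume_eq_prod, ENNReal.ofReal_prod_of_nonneg
          fun i _ => integral_nonneg (hnonneg i)]
        refine prod_congr rfl fun i _ => ?_
        rw [gaussianReal_apply_eq_integral _ (hv i), integral_indicator (hs i)]

lemma stdGaussian_eq_withDensity (ι : Type*) [Fintype ι] :
    stdGaussian (EuclideanSpace ℝ ι) = volume.withDensity fun v =>
      ENNReal.ofReal ((2 * π) ^ (-(Fintype.card ι : ℝ) / 2) * exp (-‖v‖ ^ 2 / 2)) := by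
  have hdensity (x : ι → ℝ) :
      ENNReal.ofReal ((2 * π) ^ (-(Fintype.card ι : ℝ) / 2) * exp (-‖WithLp.toLp 2 x‖ ^ 2 / 2)) =
        ∏ i, gaussianPDF 0 1 (x i) := by
    simp only [gaussianPDF]
    rw [← ENNReal.ofReal_prod_of_nonneg fun i _ => gaussianPDFReal_nonneg _ _ _]
    congr 1
    simp only [gaussianPDFReal, NNReal.coe_one, mul_one, sub_zero, prod_mul_distrib, prod_const,
      card_univ, ← exp_sum, EuclideanSpace.real_norm_sq_eq, sum_div, sum_neg_distrib, neg_div]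
    rw [sqrt_eq_rpow, ← rpow_neg (by positivity), ← rpow_natCast, ← rpow_mul (by positivity)]
    ring_nf
  rw [← map_pi_eq_stdGaussian, pi_gaussianReal_eq_withDensity _ _ fun _ => one_ne_zero]
  ext S hS
  rw [Measure.map_apply (by fun_prop) hS, withDensity_apply _ (hS.preimage (by fun_prop)),
    withDensity_apply _ hS, ← (PiLp.volume_preserving_toLp ι).map_eq,
    setLIntegral_map hS (by fun_prop) (by fun_prop)]
  simp_rw [hdensity]

lemma integral_sum_mul_sum {X α β : Type*} [MeasurableSpace X] {μ : Measure X} [Fintype α]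
    [Fintype β] (v : α → ℝ) (w : β → ℝ) (f : α → X → ℝ) (g : β → X → ℝ)
    (h : ∀ a b, Integrable (fun x => f a x * g b x) μ) :
    ∫ x, (∑ a, v a * f a x) * (∑ b, w b * g b x) ∂μ =
      ∑ a, ∑ b, v a * w b * ∫ x, f a x * g b x ∂μ := by
  have hterm (a : α) (b : β) (x : X) :
      v a * f a x * (w b * g b x) = v a * w b * (f a x * g b x) := by
    ring
  simp_rw [sum_mul_sum, hterm]
  rw [integral_finsetSum _ fun a _ => integrable_finsetSum _ fun b _ => (h a b).const_mul _]
  refine sum_congr rfl fun a _ => ?_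
  rw [integral_finsetSum _ fun b _ => (h a b).const_mul _]
  simp_rw [integral_const_mul]

lemma prod_comp_eq_prod_pow_card {ι κ M : Type*} [Fintype ι] [Fintype κ] [DecidableEq ι]
    [CommMonoid M] (x : ι → M) (f : κ → ι) : ∏ a, x (f a) = ∏ t, x t ^ #{a | f a = t} := by
  rw [← prod_fiberwise univ f]
  refine prod_congr rfl fun t _ => ?_
  rw [prod_congr rfl fun a ha => by rw [(mem_filter.1 ha).2], prod_const]

section
variable {ι : Type*} [Fintype ι]
local notation "γ" => Measure.pi fun _ : ι => gaussianReal 0 1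

lemma memLp_eval_pi_gaussianReal {p : ℝ≥0∞} (hp : p ≠ ∞) (i : ι) :
    MemLp (fun x : ι → ℝ => x i) p γ :=
  (memLp_id_gaussianReal' p hp).comp_measurePreserving (measurePreserving_eval _ i)

lemma memLp_eval_mul_eval_pi_gaussianReal (i j : ι) :
    MemLp (fun x : ι → ℝ => x i * x j) 2 γ :=
  have : ENNReal.HolderTriple 4 4 2 := ⟨by
    rw [← ENNReal.add_halves (2⁻¹ : ℝ≥0∞), ENNReal.div_eq_inv_mul,
      ← ENNReal.mul_inv (by simp) (by simp)]
    norm_num⟩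
  (memLp_eval_pi_gaussianReal (p := 4) (by simp) j).mul'
    (memLp_eval_pi_gaussianReal (p := 4) (by simp) i)

variable [DecidableEq ι]

lemma integral_prod_eval_pi_gaussianReal {κ : Type*} [Fintype κ] (f : κ → ι) :
    ∫ x, ∏ a, x (f a) ∂γ = ∏ t, ∫ y, y ^ #{a | f a = t} ∂gaussianReal 0 1 := by
  simp_rw [prod_comp_eq_prod_pow_card]
  exact integral_fintype_prod_eq_prod (fun t y => y ^ #{a | f a = t})

lemma integral_eval_mul_eval_pi_gaussianReal (i j : ι) :
    ∫ x, x i * x j ∂γ = if i = j then 1 else 0 := by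
  have h := integral_prod_eval_pi_gaussianReal ![i, j]
  simp only [Fin.prod_univ_two, Matrix.cons_val, card_filter, Fin.sum_univ_two] at h
  rw [h, ← prod_subset (subset_univ {i, j}) fun t _ ht => by
    simp only [mem_insert, mem_singleton, not_or] at ht
    simp [Ne.symm ht.1, Ne.symm ht.2]]
  by_cases hij : i = j
  · subst hij; simp [integral_pow_gaussianReal]
  · simp [prod_insert, hij, Ne.symm hij, integral_pow_gaussianReal]

lemma integral_eval_mul_eval_mul_eval_mul_eval_pi_gaussianReal (i j k l : ι) :
    ∫ x, x i * x j * x k * x l ∂γ =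
      (if i = j then 1 else 0) * (if k = l then 1 else 0) +
      (if i = k then 1 else 0) * (if j = l then 1 else 0) +
      (if i = l then 1 else 0) * (if j = k then 1 else 0) := by
  have h := integral_prod_eval_pi_gaussianReal ![i, j, k, l]
  simp only [Fin.prod_univ_four, Matrix.cons_val, card_filter, Fin.sum_univ_four] at h
  rw [h, ← prod_subset (subset_univ {i, j, k, l}) fun t _ ht => by
    simp only [mem_insert, mem_singleton, not_or] at ht
    simp [Ne.symm ht.1, Ne.symm ht.2.1, Ne.symm ht.2.2.1, Ne.symm ht.2.2.2]]
  -- each coordinate `t` contributes the moment `E[y ^ m]`, `m` the multiplicity of `t` among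
  -- `i, j, k, l`; evaluate case by case on the coincidences among the indices
  by_cases hij : i = j <;> by_cases hik : i = k <;> by_cases hil : i = l <;>
    by_cases hjk : j = k <;> by_cases hjl : j = l <;> by_cases hkl : k = l <;>
    subst_vars <;>
    simp [prod_insert, eq_comm, integral_pow_gaussianReal, Nat.even_iff, Nat.doubleFactorial, *] <;>
    norm_num

lemma integral_sq_quadratic_pi_gaussianReal (a : ℝ) (b : ι → ℝ) (c : ι → ι → ℝ) :
    ∫ x, (a + ∑ i, b i * x i + ∑ i, ∑ j, c i j * (x i * x j)) ^ 2 ∂γ =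
      a ^ 2 + ∑ i, b i ^ 2 + 2 * a * ∑ i, c i i + (∑ i, c i i) ^ 2 + ∑ i, ∑ j, c i j ^ 2 +
        ∑ i, ∑ j, c i j * c j i := by
  set L : (ι → ℝ) → ℝ := fun x => ∑ i, b i * x i
  set Q : (ι → ℝ) → ℝ := fun x => ∑ p : ι × ι, c p.1 p.2 * (x p.1 * x p.2)
  have hQ_eq (x : ι → ℝ) : ∑ i, ∑ j, c i j * (x i * x j) = Q x := (Fintype.sum_prod_type' ..).symm
  simp_rw [hQ_eq]
  have hL : MemLp L 2 γ :=
    memLp_finsetSum _ fun i _ => (memLp_eval_pi_gaussianReal (p := 2) (by simp) i).const_mul (b i)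
  have hQ : MemLp Q 2 γ :=
    memLp_finsetSum _ fun p _ => (memLp_eval_mul_eval_pi_gaussianReal p.1 p.2).const_mul _
  have hodd : ∫ x, (a + Q x) * L x ∂γ = 0 := integral_eq_zero_of_odd fun x => by
    simp [L, Q]
  have hLL : ∫ x, L x ^ 2 ∂γ = ∑ i, b i ^ 2 := by
    simp_rw [sq, L, integral_sum_mul_sum _ _ _ _ fun i j =>
      (memLp_eval_pi_gaussianReal (p := 2) (by simp) i).integrable_mul
        (memLp_eval_pi_gaussianReal (p := 2) (by simp) j)]
    simp [integral_eval_mul_eval_pi_gaussianReal]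
  have hQ1 : ∫ x, Q x ∂γ = ∑ i, c i i := by
    rw [integral_finsetSum _ fun p _ =>
      ((memLp_eval_mul_eval_pi_gaussianReal p.1 p.2).integrable one_le_two).const_mul _]
    simp [integral_const_mul, integral_eval_mul_eval_pi_gaussianReal, Fintype.sum_prod_type]
  have hQQ : ∫ x, Q x ^ 2 ∂γ =
      (∑ i, c i i) ^ 2 + ∑ i, ∑ j, c i j ^ 2 + ∑ i, ∑ j, c i j * c j i := by
    simp_rw [sq, Q, integral_sum_mul_sum _ _ _ _ fun (p q : ι × ι) =>
      (memLp_eval_mul_eval_pi_gaussianReal p.1 p.2).integrable_mul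
        (memLp_eval_mul_eval_pi_gaussianReal q.1 q.2)]
    simp_rw [← mul_assoc, integral_eval_mul_eval_mul_eval_mul_eval_pi_gaussianReal,
      Fintype.sum_prod_type]
    simp [mul_add, sum_add_distrib, mul_ite, sum_ite_eq, sum_mul_sum]
  calc ∫ x, (a + L x + Q x) ^ 2 ∂γ
      = ∫ x, a ^ 2 + 2 * a * Q x + Q x ^ 2 + L x ^ 2 + 2 * ((a + Q x) * L x) ∂γ := by
        congr 1; ext x; ring
    _ = a ^ 2 + 2 * a * ∫ x, Q x ∂γ + ∫ x, Q x ^ 2 ∂γ + ∫ x, L x ^ 2 ∂γ +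
          2 * ∫ x, (a + Q x) * L x ∂γ := by
        have iQ : Integrable Q γ := hQ.integrable one_le_two
        have iQL : Integrable (fun x => (a + Q x) * L x) γ :=
          ((memLp_const a).add hQ).integrable_mul hL
        have i1 := (integrable_const (μ := γ) (a ^ 2)).add (iQ.const_mul (2 * a))
        rw [integral_add ?_ (iQL.const_mul 2), integral_add ?_ hL.integrable_sq,
          integral_add ?_ hQ.integrable_sq, integral_add (integrable_const _) (iQ.const_mul _),
          integral_const, integral_const_mul, integral_const_mul]
        · simp
        · exact i1
        · exact i1.add hQ.integrable_sq
        · exact (i1.add hQ.integrable_sq).add hL.integrable_sq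
    _ = _ := by rw [hQ1, hQQ, hLL, hodd]; ring
end

lemma sum_sum_eq_sum_add_sum_sum_ite {ι M : Type*} [Fintype ι] [DecidableEq ι] [AddCommMonoid M]
    (f : ι → ι → M) :
    ∑ i, ∑ j, f i j = ∑ i, f i i + ∑ i, ∑ j, if i = j then 0 else f i j := by
  rw [← sum_add_distrib]
  refine sum_congr rfl fun i _ => ?_
  have hsplit (j : ι) : f i j = (if i = j then f i j else 0) + if i = j then 0 else f i j := by
    split_ifs <;> simp
  rw [sum_congr rfl fun j _ => hsplit j, sum_add_distrib, sum_ite_eq]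
  simp

lemma sq_sum_eq_sum_sq_add_sum_sum_ite {ι : Type*} [Fintype ι] [DecidableEq ι] (a : ι → ℝ) :
    (∑ i, a i) ^ 2 = ∑ i, a i ^ 2 + ∑ i, ∑ j, if i = j then 0 else a i * a j := by
  rw [sq, sum_mul_sum, sum_sum_eq_sum_add_sum_sum_ite]
  simp only [sq]

lemma sum_sum_mul_swap_eq_sum_sq_add_sum_sum_ite {ι : Type*} [Fintype ι] [DecidableEq ι]
    (c : ι → ι → ℝ) :
    ∑ i, ∑ j, c i j * c j i = ∑ i, c i i ^ 2 + ∑ i, ∑ j, if i = j then 0 else c i j * c j i := by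
  rw [sum_sum_eq_sum_add_sum_sum_ite]
  simp only [sq]

lemma sum_sum_mul_swap_le_sum_sum_sq {ι : Type*} [Fintype ι] (c : ι → ι → ℝ) :
    ∑ i, ∑ j, c i j * c j i ≤ ∑ i, ∑ j, c i j ^ 2 := by
  have h : ∑ i, ∑ j, c i j * c j i ≤ ∑ i, ∑ j, (c i j ^ 2 + c j i ^ 2) / 2 :=
    sum_le_sum fun i _ => sum_le_sum fun j _ => by linarith [two_mul_le_add_sq (c i j) (c j i)]
  simp_rw [add_div, sum_add_distrib] at h
  rw [sum_comm (f := fun i j => c j i ^ 2 / 2)] at h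
  simp_rw [← sum_div] at h
  linarith

lemma sum_add_sq_le {ι : Type*} (s : Finset ι) (a b : ι → ℝ) :
    ∑ i ∈ s, (a i + b i) ^ 2 ≤ 2 * (∑ i ∈ s, a i ^ 2 + ∑ i ∈ s, b i ^ 2) := by
  rw [← sum_add_distrib, mul_sum]
  exact sum_le_sum fun i _ => by linarith [add_sq (a i) (b i), two_mul_le_add_sq (a i) (b i)]

lemma testG_eq_quadratic {d : ℕ} (U : EuclideanSpace ℝ (Fin d) → ℝ)
    (φ₀ : ℝ × EuclideanSpace ℝ (Fin d) → ℝ) (φ : Fin d → ℝ × EuclideanSpace ℝ (Fin d) → ℝ)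
    (p : ℝ × EuclideanSpace ℝ (Fin d)) (v : EuclideanSpace ℝ (Fin d)) :
    testG U φ₀ φ (p, v) = -(Dt φ₀ p - ∑ i, φ i p * gradient U p.2 i) +
      ∑ i, (Dx i φ₀ p + Dt (φ i) p) * v i + ∑ i, ∑ j, -Dx i (φ j) p * (v i * v j) := by
  simp only [testG, mul_sum, add_mul, sum_add_distrib, neg_mul, sum_neg_distrib]
  simp only [mul_comm, mul_left_comm]
  ring

lemma integral_testG_sq_stdGaussian {d : ℕ} (U : EuclideanSpace ℝ (Fin d) → ℝ)
    (φ₀ : ℝ × EuclideanSpace ℝ (Fin d) → ℝ) (φ : Fin d → ℝ × EuclideanSpace ℝ (Fin d) → ℝ)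
    (p : ℝ × EuclideanSpace ℝ (Fin d)) :
    ∫ v, testG U φ₀ φ (p, v) ^ 2 ∂stdGaussian (EuclideanSpace ℝ (Fin d)) =
      (Dt φ₀ p - ∑ i, φ i p * gradient U p.2 i) ^ 2 + ∑ i, (Dx i φ₀ p + Dt (φ i) p) ^ 2 +
        2 * (Dt φ₀ p - ∑ i, φ i p * gradient U p.2 i) * ∑ i, Dx i (φ i) p +
        (∑ i, Dx i (φ i) p) ^ 2 + ∑ i, ∑ j, Dx i (φ j) p ^ 2 +
        ∑ i, ∑ j, Dx i (φ j) p * Dx j (φ i) p := by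
  rw [← map_pi_eq_stdGaussian, ← MeasurableEquiv.coe_toLp, integral_map_equiv]
  simp only [testG_eq_quadratic, MeasurableEquiv.coe_toLp,
    integral_sq_quadratic_pi_gaussianReal]
  simp only [neg_sq, sum_neg_distrib, neg_mul_neg]
  ring

lemma integral_testG_sq_stdGaussian_le {d : ℕ} (U : EuclideanSpace ℝ (Fin d) → ℝ)
    (φ₀ : ℝ × EuclideanSpace ℝ (Fin d) → ℝ) (φ : Fin d → ℝ × EuclideanSpace ℝ (Fin d) → ℝ)
    (p : ℝ × EuclideanSpace ℝ (Fin d)) :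
    ∫ v, testG U φ₀ φ (p, v) ^ 2 ∂stdGaussian (EuclideanSpace ℝ (Fin d)) ≤
      (Dt φ₀ p - ∑ i, φ i p * gradient U p.2 i + ∑ i, Dx i (φ i) p) ^ 2 +
        2 * (∑ i, Dx i φ₀ p ^ 2 + ∑ i, Dt (φ i) p ^ 2 + ∑ i, ∑ j, Dx i (φ j) p ^ 2) := by
  rw [integral_testG_sq_stdGaussian]
  nlinarith [sum_add_sq_le univ (fun i => Dx i φ₀ p) (fun i => Dt (φ i) p),
    sum_sum_mul_swap_le_sum_sum_sq fun i j => Dx i (φ j) p]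

theorem testG_norm_computation_general (d : ℕ) (T : ℝ)
    (U : EuclideanSpace ℝ (Fin d) → ℝ)
    (μ κ : Measure (EuclideanSpace ℝ (Fin d)))
    (hμ : μ = volume.withDensity
      (fun x => ENNReal.ofReal (Real.exp (-U x) / ∫ y, Real.exp (-U y))))
    (hκ : κ = volume.withDensity
      (fun v : EuclideanSpace ℝ (Fin d) => ENNReal.ofReal
        ((2 * Real.pi) ^ (-(d : ℝ) / 2) * Real.exp (-‖v‖ ^ 2 / 2))))
    (ν : Measure (ℝ × EuclideanSpace ℝ (Fin d)))
    (hν : ν = (volume.restrict (Set.Ioo 0 T)).prod μ)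
    (η : Measure ((ℝ × EuclideanSpace ℝ (Fin d)) × EuclideanSpace ℝ (Fin d)))
    (hη : η = ((volume.restrict (Set.Ioo 0 T)).prod μ).prod κ)
    (φ₀ : ℝ × EuclideanSpace ℝ (Fin d) → ℝ)
    (φ : Fin d → ℝ × EuclideanSpace ℝ (Fin d) → ℝ)
    (hintG : Integrable (fun q => (testG U φ₀ φ q) ^ 2) η)
    (hintA : Integrable (fun p =>
      (Dt φ₀ p - ∑ i, φ i p * gradient U p.2 i + ∑ i, Dx i (φ i) p) ^ 2) ν)
    (hint0 : ∀ i, Integrable (fun p => (Dx i φ₀ p) ^ 2) ν)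
    (hintt : ∀ i, Integrable (fun p => (Dt (φ i) p) ^ 2) ν)
    (hintx : ∀ i j, Integrable (fun p => (Dx i (φ j) p) ^ 2) ν) :
    (∫ q, (testG U φ₀ φ q) ^ 2 ∂η =
      ∫ p, ((Dt φ₀ p - ∑ i, φ i p * gradient U p.2 i) ^ 2 +
        (∑ i, (Dx i φ₀ p + Dt (φ i) p) ^ 2) +
        2 * (Dt φ₀ p - ∑ i, φ i p * gradient U p.2 i) * (∑ i, Dx i (φ i) p) +
        3 * (∑ i, (Dx i (φ i) p) ^ 2) +
        (∑ i, ∑ j, if i = j then 0 else (Dx i (φ j) p) ^ 2) +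
        (∑ i, ∑ j, if i = j then 0 else Dx i (φ i) p * Dx j (φ j) p) +
        (∑ i, ∑ j, if i = j then 0 else Dx i (φ j) p * Dx j (φ i) p)) ∂ν) ∧
    (∫ q, (testG U φ₀ φ q) ^ 2 ∂η ≤
      (∫ p, (Dt φ₀ p - ∑ i, φ i p * gradient U p.2 i + ∑ i, Dx i (φ i) p) ^ 2 ∂ν) +
        2 * ((∑ i, ∫ p, (Dx i φ₀ p) ^ 2 ∂ν) + (∑ i, ∫ p, (Dt (φ i) p) ^ 2 ∂ν) +
          ∑ i, ∑ j, ∫ p, (Dx i (φ j) p) ^ 2 ∂ν)) := by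
  have : SFinite μ := hμ ▸ inferInstance
  have : SFinite ν := hν ▸ inferInstance
  obtain rfl : κ = stdGaussian (EuclideanSpace ℝ (Fin d)) := by
    rw [hκ, stdGaussian_eq_withDensity, Fintype.card_fin]
  rw [hη, ← hν] at hintG ⊢
  rw [integral_prod _ hintG]
  constructor
  · refine integral_congr_ae (ae_of_all _ fun p => ?_)
    dsimp only
    rw [integral_testG_sq_stdGaussian]
    linear_combination sq_sum_eq_sum_sq_add_sum_sum_ite (fun i => Dx i (φ i) p) +
      sum_sum_eq_sum_add_sum_sum_ite (fun i j => Dx i (φ j) p ^ 2) +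
      sum_sum_mul_swap_eq_sum_sq_add_sum_sum_ite (fun i j => Dx i (φ j) p)
  · have i0 := integrable_finsetSum univ fun i _ => hint0 i
    have it := integrable_finsetSum univ fun i _ => hintt i
    have ix := integrable_finsetSum univ fun i _ => integrable_finsetSum univ fun j _ => hintx i j
    calc ∫ p, ∫ v, testG U φ₀ φ (p, v) ^ 2 ∂stdGaussian (EuclideanSpace ℝ (Fin d)) ∂ν
        ≤ ∫ p, (Dt φ₀ p - ∑ i, φ i p * gradient U p.2 i + ∑ i, Dx i (φ i) p) ^ 2 +
            2 * (∑ i, Dx i φ₀ p ^ 2 + ∑ i, Dt (φ i) p ^ 2 + ∑ i, ∑ j, Dx i (φ j) p ^ 2) ∂ν :=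
          integral_mono hintG.integral_prod_left (hintA.add (((i0.add it).add ix).const_mul 2))
            (integral_testG_sq_stdGaussian_le U φ₀ φ)
      _ = _ := by
          rw [integral_add hintA ?_, integral_const_mul, integral_add ?_ ix, integral_add i0 it,
            integral_finsetSum _ fun i _ => hint0 i, integral_finsetSum _ fun i _ => hintt i,
            integral_finsetSum _ fun i _ => integrable_finsetSum univ fun j _ => hintx i j]
          · simp_rw [integral_finsetSum _ fun j _ => hintx _ j]
          · exact i0.add it
          · exact ((i0.add it).add ix).const_mul 2

/-- Squared `L²(dt⊗ρ∞)`-norm computation for the hypocoercive test function `G`: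
integrating out the Gaussian velocity variable gives an explicit expression in terms of
`φ₀, φ` and their derivatives, and consequently
`∫ G² ≤ ∫ (∂_tφ₀ - φ·∇U + ∇_x·φ)² + 2 Σ_{(i,j)≠(0,0)} ‖∂_{x_i}φ_j‖²` (`∂_{x_0} = ∂_t`). -/
theorem testG_norm_computation (d : ℕ) (T : ℝ) (hT : 0 < T)
    (U : EuclideanSpace ℝ (Fin d) → ℝ) (hU : ContDiff ℝ 2 U)
    (hUint : Integrable (fun x => Real.exp (-U x)))
    (μ κ : Measure (EuclideanSpace ℝ (Fin d)))
    (hμ : μ = volume.withDensity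
      (fun x => ENNReal.ofReal (Real.exp (-U x) / ∫ y, Real.exp (-U y))))
    (hκ : κ = volume.withDensity
      (fun v : EuclideanSpace ℝ (Fin d) => ENNReal.ofReal
        ((2 * Real.pi) ^ (-(d : ℝ) / 2) * Real.exp (-‖v‖ ^ 2 / 2))))
    (ν : Measure (ℝ × EuclideanSpace ℝ (Fin d)))
    (hν : ν = (volume.restrict (Set.Ioo 0 T)).prod μ)
    (η : Measure ((ℝ × EuclideanSpace ℝ (Fin d)) × EuclideanSpace ℝ (Fin d)))
    (hη : η = ((volume.restrict (Set.Ioo 0 T)).prod μ).prod κ)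
    (φ₀ : ℝ × EuclideanSpace ℝ (Fin d) → ℝ) (hφ₀ : ContDiff ℝ 1 φ₀)
    (φ : Fin d → ℝ × EuclideanSpace ℝ (Fin d) → ℝ) (hφ : ∀ i, ContDiff ℝ 1 (φ i))
    (hintG : Integrable (fun q => (testG U φ₀ φ q) ^ 2) η)
    (hintA : Integrable (fun p =>
      (Dt φ₀ p - ∑ i, φ i p * gradient U p.2 i + ∑ i, Dx i (φ i) p) ^ 2) ν)
    (hint0 : ∀ i, Integrable (fun p => (Dx i φ₀ p) ^ 2) ν)
    (hintt : ∀ i, Integrable (fun p => (Dt (φ i) p) ^ 2) ν)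
    (hintx : ∀ i j, Integrable (fun p => (Dx i (φ j) p) ^ 2) ν) :
    (∫ q, (testG U φ₀ φ q) ^ 2 ∂η =
      ∫ p, ((Dt φ₀ p - ∑ i, φ i p * gradient U p.2 i) ^ 2 +
        (∑ i, (Dx i φ₀ p + Dt (φ i) p) ^ 2) +
        2 * (Dt φ₀ p - ∑ i, φ i p * gradient U p.2 i) * (∑ i, Dx i (φ i) p) +
        3 * (∑ i, (Dx i (φ i) p) ^ 2) +
        (∑ i, ∑ j, if i = j then 0 else (Dx i (φ j) p) ^ 2) +
        (∑ i, ∑ j, if i = j then 0 else Dx i (φ i) p * Dx j (φ j) p) +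
        (∑ i, ∑ j, if i = j then 0 else Dx i (φ j) p * Dx j (φ i) p)) ∂ν) ∧
    (∫ q, (testG U φ₀ φ q) ^ 2 ∂η ≤
      (∫ p, (Dt φ₀ p - ∑ i, φ i p * gradient U p.2 i + ∑ i, Dx i (φ i) p) ^ 2 ∂ν) +
        2 * ((∑ i, ∫ p, (Dx i φ₀ p) ^ 2 ∂ν) + (∑ i, ∫ p, (Dt (φ i) p) ^ 2 ∂ν) +
          ∑ i, ∑ j, ∫ p, (Dx i (φ j) p) ^ 2 ∂ν)) :=
  testG_norm_computation_general d T U μ κ hμ hκ ν hν η hη φ₀ φ hintG hintA hint0 hintt hintx
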